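/- arXiv:2210.15436 — 5 statements merged into one kernel-verified Lean document; each statement's English description precedes it below -/
import Mathlib

section
/- Let C be a free linear code of length n and rank K over a finite chain ring R with p^s elements, and let d^\perp be the minimum distance of its dual. For every \nu with n - d^\perp < \nu \le n, the weight distribution (A_l) of C satisfies \sum_{l=0}^{\nu} \binom{n-l}{\nu-l} A_l = \binom{n}{\nu} p^{s(\nu + K - n)}. -/
open Matrix Finset

/-- The Hamming weight of a vector: number of nonzero entries. -/
noncomputable def wt {R : Type*} [Zero R] {n : ℕ} (v : Fin n → R) : ℕ :=
  Nat.card {i : Fin n // v i ≠ 0}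

/-- Minimum Hamming distance (= minimum weight of a nonzero codeword). -/
noncomputable def minDist {R : Type*} [Zero R] {n : ℕ} (C : Set (Fin n → R)) : ℕ :=
  sInf {w | ∃ c ∈ C, c ≠ 0 ∧ wt c = w}

/-- Dual code w.r.t. the standard inner product. -/
def dualCode {R : Type*} [CommRing R] {n : ℕ} (C : Submodule R (Fin n → R)) :
    Submodule R (Fin n → R) where
  carrier := {v | ∀ c ∈ C, ∑ i, v i * c i = 0}
  add_mem' := by
    intro a b ha hb c hc
    simp only [Set.mem_setOf_eq] at *
    simp [Pi.add_apply, add_mul, Finset.sum_add_distrib, ha c hc, hb c hc]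
  zero_mem' := by
    intro c hc
    simp
  smul_mem' := by
    intro r v hv c hc
    simp only [Set.mem_setOf_eq] at *
    simp [Pi.smul_apply, smul_eq_mul, mul_assoc, ← Finset.mul_sum, hv c hc]

/-- The rank of a code: minimal number of generators. -/
noncomputable def rankCode {R M : Type*} [Ring R] [AddCommGroup M] [Module R M] (C : Submodule R M) : ℕ :=
  sInf {k | ∃ S : Finset M, S.card = k ∧ Submodule.span R (S : Set M) = C}

/-- `H` is a parity-check matrix for `C` : its kernel is exactly `C`. -/
def IsParityCheck {R : Type*} [CommRing R] {m n : ℕ} (H : Matrix (Fin m) (Fin n) R)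
    (C : Submodule R (Fin n → R)) : Prop :=
  ∀ v, v ∈ C ↔ H.mulVec v = 0

/-- A matrix (with rows indexed by `m`, columns by `ι`) has type `(t 0, …, t (s-1))` if exactly
`t i` of its rows are divisible by `γ^i` but not by `γ^(i+1)`. -/
def MatrixType {R : Type*} [CommRing R] {m ι : Type*} (γ : R) (s : ℕ)
    (M : m → ι → R) (t : ℕ → ℕ) : Prop :=
  ∀ i < s, Nat.card {r : m // (∃ u, M r = γ ^ i • u) ∧ ¬ ∃ u, M r = γ ^ (i + 1) • u} = t i

/-- A code has type `(k 0, …, k (s-1))` if it admits a generator matrix (rows span the code,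
no row is a combination of the others) of that row type. -/
def CodeHasType {R : Type*} [CommRing R] {n : ℕ} (γ : R) (s : ℕ)
    (C : Submodule R (Fin n → R)) (k : ℕ → ℕ) : Prop :=
  ∃ G : Matrix (Fin (∑ i ∈ Finset.range s, k i)) (Fin n) R,
    Submodule.span R (Set.range G) = C ∧
    (∀ j, G j ∉ Submodule.span R (Set.range G \ {G j})) ∧
    MatrixType γ s G k

/-- The weight distribution of a code. -/
noncomputable def weightDist {R : Type*} [CommRing R] {n : ℕ} (C : Submodule R (Fin n → R)) (l : ℕ) : ℕ :=
  Nat.card {c : Fin n → R // c ∈ C ∧ wt c = l}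

/-- A ring is a chain ring if its ideals are linearly ordered by inclusion. -/
def IsChainRing (R : Type*) [Ring R] : Prop := ∀ I J : Ideal R, I ≤ J ∨ J ≤ I

/-- `γ` generates the (unique) maximal ideal of `R`. -/
def MaxIdealGen {R : Type*} [CommRing R] (γ : R) : Prop :=
  Ideal.span {γ} ≠ ⊤ ∧ ∀ I : Ideal R, I ≠ ⊤ → I ≤ Ideal.span {γ}

/-!
Fix a set `T` of `ν` coordinates. The codewords supported in `T` form the kernel of the
restriction of `C` to the `n - ν` coordinates outside `T`, and this restriction is onto because
`n - ν < d⊥`: otherwise its image is a proper submodule of `R^(n-ν)`, hence orthogonal to a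
nonzero vector (a simple quotient of `R^(n-ν)` is a copy of the residue field, which embeds in
`R` as `σ R` for a nonzero `σ` killed by the maximal ideal), and that vector extended by zero is
a dual codeword of weight at most `n - ν`. So every `T` carries `|C| / |R|^(n-ν)` codewords, and
counting the pairs `(c, T)` with `|T| = ν` and `supp c ⊆ T` in two ways gives the identity.
-/

namespace IsChainRing

variable {R : Type*} [CommRing R]

theorem mem_of_not_isUnit (hR : IsChainRing R) {I : Ideal R} (hI : I.IsMaximal) {y : R}
    (hy : ¬IsUnit y) : y ∈ I := by
  have hy' : Ideal.span {y} ≠ ⊤ := by rwa [Ne, Ideal.span_singleton_eq_top]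
  rcases hR (Ideal.span {y}) I with h | h
  · exact h (Ideal.mem_span_singleton_self y)
  · rw [hI.eq_of_le hy' h]
    exact Ideal.mem_span_singleton_self y

theorem exists_ne_zero_mul_eq_zero [Finite R] [Nontrivial R] (hR : IsChainRing R) :
    ∃ σ : R, σ ≠ 0 ∧ ∀ y : R, ¬IsUnit y → σ * y = 0 := by
  obtain ⟨J, hJ, -⟩ := (eq_bot_or_exists_atom_le (⊤ : Ideal R)).resolve_left top_ne_bot
  have : IsSimpleModule R J := isSimpleModule_iff_isAtom.mpr hJ
  obtain ⟨σ, hσJ, hσ⟩ := Submodule.exists_mem_ne_zero_of_ne_bot hJ.1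
  refine ⟨σ, hσ, fun y hy => ?_⟩
  have hy : y ∈ Module.annihilator R J :=
    hR.mem_of_not_isUnit IsSimpleModule.annihilator_isMaximal hy
  simpa [mul_comm] using congrArg Subtype.val (Module.mem_annihilator.mp hy ⟨σ, hσJ⟩)

end IsChainRing

theorem Submodule.exists_dual_ne_zero_of_ne_top {R V : Type*} [CommRing R] [AddCommGroup V]
    [Module R V] [Module.Finite R V] {σ : R} (hσ : σ ≠ 0)
    (hann : ∀ y : R, ¬IsUnit y → σ * y = 0) {M : Submodule R V} (hM : M ≠ ⊤) :
    ∃ ψ : Module.Dual R V, ψ ≠ 0 ∧ M ≤ LinearMap.ker ψ := by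
  obtain ⟨N, hN, hMN⟩ := (eq_top_or_exists_le_coatom M).resolve_left hM
  have : IsSimpleModule R (V ⧸ N) := isSimpleModule_iff_isCoatom.mpr hN
  obtain ⟨I, hI, ⟨e⟩⟩ := isSimpleModule_iff_quot_maximal.mp this
  let φ : R ⧸ I →ₗ[R] R := I.liftQ (LinearMap.toSpanSingleton R R σ) fun r hr => by
    simpa [mul_comm] using hann r fun hu => hI.ne_top (I.eq_top_of_isUnit_mem hr hu)
  refine ⟨φ ∘ₗ (e : V ⧸ N →ₗ[R] R ⧸ I) ∘ₗ N.mkQ, fun hψ => hσ ?_, fun v hv => ?_⟩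
  · obtain ⟨v, hv⟩ := N.mkQ_surjective (e.symm (Submodule.Quotient.mk 1))
    have h := LinearMap.congr_fun hψ v
    rw [LinearMap.comp_apply, LinearMap.comp_apply, hv, LinearEquiv.coe_coe,
      LinearEquiv.apply_symm_apply, Submodule.liftQ_apply] at h
    simpa using h
  · simp [(Submodule.Quotient.mk_eq_zero N).mpr (hMN hv)]

theorem Submodule.exists_dotProduct_eq_zero_of_ne_top {R ι : Type*} [CommRing R] [Fintype ι]
    {σ : R} (hσ : σ ≠ 0) (hann : ∀ y : R, ¬IsUnit y → σ * y = 0) {M : Submodule R (ι → R)}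
    (hM : M ≠ ⊤) : ∃ x : ι → R, x ≠ 0 ∧ ∀ y ∈ M, x ⬝ᵥ y = 0 := by
  classical
  obtain ⟨ψ, hψ, hMψ⟩ := exists_dual_ne_zero_of_ne_top hσ hann hM
  refine ⟨(dotProductEquiv R ι).symm ψ, by simpa using hψ, fun y hy => ?_⟩
  calc (dotProductEquiv R ι).symm ψ ⬝ᵥ y
      = dotProductEquiv R ι ((dotProductEquiv R ι).symm ψ) y := rfl
    _ = 0 := by rw [LinearEquiv.apply_symm_apply]; exact hMψ hy

section Weight

variable {R : Type*} [Zero R] {n : ℕ}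

theorem wt_eq_card_filter [DecidableEq R] (v : Fin n → R) : wt v = #{i | v i ≠ 0} := by
  rw [wt, Nat.card_eq_fintype_card, Fintype.card_subtype]

theorem wt_le_card_of_forall_notMem_eq_zero {v : Fin n → R} {T : Finset (Fin n)}
    (hv : ∀ i ∉ T, v i = 0) : wt v ≤ #T := by
  classical
  rw [wt_eq_card_filter]
  exact card_le_card fun i hi => by_contra fun hiT => (mem_filter.mp hi).2 (hv i hiT)

theorem minDist_le_wt {S : Set (Fin n → R)} {c : Fin n → R} (hc : c ∈ S) (h0 : c ≠ 0) :
    minDist S ≤ wt c :=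
  Nat.sInf_le ⟨c, hc, h0, rfl⟩

theorem nontrivial_of_minDist_ne_zero {S : Set (Fin n → R)} (h : minDist S ≠ 0) :
    Nontrivial R := by
  obtain ⟨-, c, -, hc, -⟩ := Nat.nonempty_of_pos_sInf (Nat.pos_of_ne_zero h)
  obtain ⟨i, hi⟩ := Function.ne_iff.mp hc
  exact ⟨_, _, hi⟩

theorem sum_choose_mul_card_wt_eq [DecidableEq R] (A : Finset (Fin n → R)) (ν : ℕ) :
    ∑ l ∈ range (ν + 1), (n - l).choose (ν - l) * #{c ∈ A | wt c = l}
      = ∑ T ∈ powersetCard ν univ, #{c ∈ A | ∀ i ∉ T, c i = 0} := by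
  have hsupp : ∀ c : Fin n → R, ∀ T : Finset (Fin n),
      (∀ i ∉ T, c i = 0) ↔ ({i | c i ≠ 0} : Finset (Fin n)) ⊆ T := by
    intro c T
    simp [subset_iff, not_imp_comm]
  have hcount : ∀ c : Fin n → R, wt c ≤ ν →
      #{T ∈ powersetCard ν univ | ∀ i ∉ T, c i = 0} = (n - wt c).choose (ν - wt c) := by
    intro c hc
    simp_rw [hsupp c, wt_eq_card_filter]
    rw [wt_eq_card_filter] at hc
    simpa using card_filter_powersetCard_subset _ univ ν (subset_univ _) hc
  have hzero : ∀ c : Fin n → R, ¬wt c ≤ ν →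
      #{T ∈ powersetCard ν univ | ∀ i ∉ T, c i = 0} = 0 := by
    intro c hc
    refine card_eq_zero.mpr (filter_eq_empty_iff.mpr fun T hT hcT => hc ?_)
    exact (mem_powersetCard.mp hT).2 ▸ wt_le_card_of_forall_notMem_eq_zero hcT
  calc ∑ l ∈ range (ν + 1), (n - l).choose (ν - l) * #{c ∈ A | wt c = l}
      = ∑ l ∈ range (ν + 1), ∑ c ∈ A with wt c = l, (n - wt c).choose (ν - wt c) := by
        refine sum_congr rfl fun l _ => ?_
        rw [sum_congr rfl fun c hc => by rw [(mem_filter.mp hc).2], sum_const, smul_eq_mul,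
          mul_comm]
    _ = ∑ c ∈ A with wt c ∈ range (ν + 1), (n - wt c).choose (ν - wt c) :=
        sum_fiberwise_eq_sum_filter _ _ _ _
    _ = ∑ c ∈ A, #{T ∈ powersetCard ν univ | ∀ i ∉ T, c i = 0} := by
        rw [sum_filter]
        refine sum_congr rfl fun c _ => ?_
        by_cases hc : wt c ≤ ν
        · rw [if_pos (mem_range_succ_iff.mpr hc), hcount c hc]
        · rw [if_neg (mt mem_range_succ_iff.mp hc), hzero c hc]
    _ = ∑ T ∈ powersetCard ν univ, #{c ∈ A | ∀ i ∉ T, c i = 0} := by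
        simp only [card_filter]
        exact sum_comm

end Weight

section DualDistance

variable {R : Type*} [CommRing R] {σ : R} {n : ℕ}

theorem surjective_restrict_of_card_compl_lt_minDist (hσ : σ ≠ 0)
    (hann : ∀ y : R, ¬IsUnit y → σ * y = 0) (C : Submodule R (Fin n → R)) (T : Finset (Fin n))
    (hT : n - #T < minDist (dualCode C : Set (Fin n → R))) :
    Function.Surjective (LinearMap.funLeft R R ((↑) : {i // i ∉ T} → Fin n) ∘ₗ C.subtype) := by
  classical
  rw [← LinearMap.range_eq_top]
  by_contra hne
  obtain ⟨x, hx, hxC⟩ := Submodule.exists_dotProduct_eq_zero_of_ne_top hσ hann hne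
  let x' : Fin n → R := fun i => if h : i ∉ T then x ⟨i, h⟩ else 0
  have hx'C : x' ∈ dualCode C := fun c hc => by
    rw [← Fintype.sum_subtype_add_sum_subtype (· ∉ T)]
    have hin : ∀ i : {i // i ∉ T}, x' i * c i = x i * c i := fun i => by
      simp only [x', dif_pos i.2]
    have hout : ∀ i : {i // ¬i ∉ T}, x' i * c i = 0 := fun i => by
      simp only [x', dif_neg i.2, zero_mul]
    simp only [hin, hout, sum_const_zero, add_zero]
    exact hxC _ ⟨⟨c, hc⟩, rfl⟩
  have hx'0 : x' ≠ 0 := by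
    obtain ⟨j, hj⟩ := Function.ne_iff.mp hx
    exact Function.ne_iff.mpr ⟨j, by simpa [x', j.2] using hj⟩
  have hwt : wt x' ≤ #Tᶜ :=
    wt_le_card_of_forall_notMem_eq_zero fun i hi => dif_neg (by simpa using hi)
  rw [card_compl, Fintype.card_fin] at hwt
  exact absurd ((minDist_le_wt hx'C hx'0).trans hwt) (not_le.mpr hT)

theorem card_supported_mul_pow_eq_card (hσ : σ ≠ 0)
    (hann : ∀ y : R, ¬IsUnit y → σ * y = 0) (C : Submodule R (Fin n → R)) (T : Finset (Fin n))
    (hT : n - #T < minDist (dualCode C : Set (Fin n → R))) :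
    Nat.card {c // c ∈ C ∧ ∀ i ∉ T, c i = 0} * Nat.card R ^ (n - #T) = Nat.card C := by
  set f := LinearMap.funLeft R R ((↑) : {i // i ∉ T} → Fin n) ∘ₗ C.subtype
  have hker : LinearMap.ker f ≃ {c // c ∈ C ∧ ∀ i ∉ T, c i = 0} :=
    (Equiv.subtypeEquivRight fun c => by simp [f, funext_iff]).trans
      (Equiv.subtypeSubtypeEquivSubtypeInter (· ∈ C) _)
  have himage : Nat.card (C ⧸ LinearMap.ker f) = Nat.card R ^ (n - #T) := by
    rw [Nat.card_congr (f.quotKerEquivOfSurjective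
      (surjective_restrict_of_card_compl_lt_minDist hσ hann C T hT)).toEquiv, Nat.card_fun]
    simp
  rw [(LinearMap.ker f).card_eq_card_quotient_mul_card, himage, Nat.card_congr hker, mul_comm]

end DualDistance

theorem stmt_7 {R : Type*} [CommRing R] [Fintype R] (hR : IsChainRing R)
    (p s : ℕ) (hcard : Nat.card R = p ^ s)
    {n K : ℕ} (C : Submodule R (Fin n → R)) (hfree : Nonempty (C ≃ₗ[R] (Fin K → R)))
    (ν : ℕ) (hν1 : n - minDist (dualCode C : Set (Fin n → R)) < ν) (hν2 : ν ≤ n) :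
    ((∑ l ∈ Finset.range (ν + 1), (n - l).choose (ν - l) * weightDist C l : ℕ) : ℚ)
      = (n.choose ν : ℚ) * (p : ℚ) ^ ((s * ν + s * K : ℤ) - s * n) := by
  classical
  have : Nontrivial R :=
    nontrivial_of_minDist_ne_zero (S := (dualCode C : Set (Fin n → R))) (by omega)
  obtain ⟨σ, hσ, hann⟩ := hR.exists_ne_zero_mul_eq_zero
  let A : Finset (Fin n → R) := {c | c ∈ C}
  have hA : ∀ (P : (Fin n → R) → Prop) [DecidablePred P],
      Nat.card {c // c ∈ C ∧ P c} = #{c ∈ A | P c} := by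
    intro P _
    rw [Nat.card_eq_fintype_card, Fintype.card_subtype, filter_filter]
  have hC : Nat.card C = Nat.card R ^ K := by
    rw [Nat.card_congr hfree.some.toEquiv, Nat.card_fun, Nat.card_fin]
  have hq : (Nat.card R : ℚ) ≠ 0 := Nat.cast_ne_zero.mpr Nat.card_pos.ne'
  have hsupported : ∀ T ∈ powersetCard ν univ,
      (#{c ∈ A | ∀ i ∉ T, c i = 0} : ℚ) = (Nat.card R : ℚ) ^ ((ν + K : ℤ) - n) := by
    intro T hT
    have hTν := (mem_powersetCard.mp hT).2
    have h := card_supported_mul_pow_eq_card hσ hann C T (by omega)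
    rw [hA, hC, hTν] at h
    rw [show (ν + K : ℤ) - n = K - (n - ν : ℕ) by push_cast [Nat.cast_sub hν2]; ring,
      zpow_sub₀ hq, zpow_natCast, zpow_natCast, eq_div_iff (pow_ne_zero _ hq)]
    exact_mod_cast h
  rw [show (s * ν + s * K : ℤ) - s * n = s * ((ν + K : ℤ) - n) by ring, _root_.zpow_mul,
    zpow_natCast, ← Nat.cast_pow, ← hcard]
  simp only [weightDist, hA]
  rw [sum_choose_mul_card_wt_eq, Nat.cast_sum, sum_congr rfl hsupported, sum_const,
    card_powersetCard, card_univ, Fintype.card_fin, nsmul_eq_mul]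
end

section
/- Let C be a linear code of length n over a finite chain ring, with dual minimum distance d^\perp, and let H be a parity-check matrix in standard form for a code of type (k_0,...,k_{s-1}) and rank K. For n - d^\perp < \nu \le n, the number of (n-k_0) \times \nu submatrices of H of type (t_0, t_1, ..., t_{s-1}) equals \binom{n}{\nu} if (t_0,...,t_{s-1}) = (n-K, k_{s-1}, ..., k_1) and 0 otherwise. -/
open Matrix Finset

/-!
Restricting the rows of `H` to any `ν > n - d^⊥` columns does not change their `γ`-adic
divisibility, so every such submatrix has the type of `H` itself. Indeed, if a row `h` of `H`
is divisible by `γ^i` on the chosen columns, then `γ^(s-i) h` is a dual codeword vanishing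
there, hence of weight `≤ n - ν < d^⊥`, hence zero; and since `γ` generates the maximal ideal
and has nilpotency index `s`, the annihilator of `γ^(s-i)` is `(γ^i)`. So either all or none
of the `ν`-subsets of columns give a submatrix of type `t`.
-/

section ChainRing

variable {R : Type*} [CommRing R] {γ : R}

theorem MaxIdealGen.dvd_of_not_isUnit (hmax : MaxIdealGen γ) {u : R} (hu : ¬ IsUnit u) :
    γ ∣ u :=
  Ideal.mem_span_singleton.mp <|
    hmax.2 _ (by rwa [Ne, Ideal.span_singleton_eq_top]) (Ideal.mem_span_singleton_self u)

theorem MaxIdealGen.exists_eq_pow_mul_isUnit (hmax : MaxIdealGen γ) {s : ℕ} (hnil : γ ^ s = 0)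
    {x : R} (hx : x ≠ 0) : ∃ j u, IsUnit u ∧ x = γ ^ j * u := by
  classical
  have hdvd_s : ¬ γ ^ s ∣ x := by rwa [hnil, zero_dvd_iff]
  set j := Nat.findGreatest (fun j => γ ^ j ∣ x) s
  obtain ⟨u, hu⟩ : γ ^ j ∣ x :=
    Nat.findGreatest_spec (P := fun j => γ ^ j ∣ x) (Nat.zero_le s) (by simp)
  have hj : j < s := (Nat.findGreatest_le s).lt_of_ne fun h => hdvd_s (h ▸ ⟨u, hu⟩)
  have hdvd_succ : ¬ γ ^ (j + 1) ∣ x := Nat.findGreatest_is_greatest (Nat.lt_succ_self j) hj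
  refine ⟨j, u, by_contra fun hunit => hdvd_succ ?_, hu⟩
  obtain ⟨v, hv⟩ := hmax.dvd_of_not_isUnit hunit
  exact ⟨v, by rw [hu, hv]; ring⟩

theorem MaxIdealGen.pow_dvd_of_pow_sub_mul_eq_zero (hmax : MaxIdealGen γ) {s i : ℕ}
    (hnil : γ ^ s = 0) (hnil' : γ ^ (s - 1) ≠ 0) (hi : i ≤ s) {x : R}
    (hx : γ ^ (s - i) * x = 0) : γ ^ i ∣ x := by
  rcases eq_or_ne x 0 with rfl | hx0
  · exact dvd_zero _
  obtain ⟨j, u, hu, rfl⟩ := hmax.exists_eq_pow_mul_isUnit hnil hx0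
  have hpow : γ ^ (s - i + j) = 0 := by
    rw [pow_add, ← hu.mul_left_eq_zero, mul_assoc, hx]
  have hsj : s ≤ s - i + j := by
    by_contra! hlt
    exact hnil' (pow_eq_zero_of_le (by omega) hpow)
  exact (pow_dvd_pow γ (by omega)).mul_right u

end ChainRing

section Codes

variable {R : Type*} [CommRing R] {n : ℕ}

theorem wt_le_of_forall_mem_eq_zero {c : Fin n → R} {I : Finset (Fin n)}
    (hc : ∀ j ∈ I, c j = 0) : wt c ≤ n - I.card := by
  classical
  have hsupp : (Finset.univ.filter fun j => c j ≠ 0) ⊆ Iᶜ := fun j hj =>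
    Finset.mem_compl.mpr fun hjI => (Finset.mem_filter.mp hj).2 (hc j hjI)
  calc wt c = (Finset.univ.filter fun j => c j ≠ 0).card := by
        rw [wt, Nat.card_eq_fintype_card, Fintype.card_subtype]
    _ ≤ Iᶜ.card := Finset.card_le_card hsupp
    _ = n - I.card := by rw [Finset.card_compl, Fintype.card_fin]

theorem eq_zero_of_forall_mem_eq_zero_of_sub_minDist_lt {D : Set (Fin n → R)}
    {c : Fin n → R} (hcD : c ∈ D) {I : Finset (Fin n)} (hI : n - minDist D < I.card)
    (hc : ∀ j ∈ I, c j = 0) : c = 0 := by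
  by_contra hne
  have hmin : minDist D ≤ wt c := Nat.sInf_le ⟨c, hcD, hne, rfl⟩
  have hwt := wt_le_of_forall_mem_eq_zero hc
  have hIn : I.card ≤ n := by simpa using I.card_le_univ
  omega

theorem IsParityCheck.row_mem_dualCode {m : ℕ} {H : Matrix (Fin m) (Fin n) R}
    {C : Submodule R (Fin n → R)} (hH : IsParityCheck H C) (r : Fin m) : H r ∈ dualCode C :=
  fun c hc => by simpa [Matrix.mulVec, dotProduct] using congrFun ((hH c).mp hc) r

theorem exists_restrict_eq_pow_smul_iff {γ : R} (hmax : MaxIdealGen γ) {s i : ℕ}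
    (hnil : γ ^ s = 0) (hnil' : γ ^ (s - 1) ≠ 0) (hi : i ≤ s) {D : Submodule R (Fin n → R)}
    {v : Fin n → R} (hv : v ∈ D) {I : Finset (Fin n)}
    (hI : n - minDist (D : Set (Fin n → R)) < I.card) :
    (∃ u, I.restrict v = γ ^ i • u) ↔ ∃ u, v = γ ^ i • u := by
  constructor
  · rintro ⟨u, hu⟩
    have hvanish : ∀ j ∈ I, (γ ^ (s - i) • v) j = 0 := fun j hj => by
      have hvj : v j = γ ^ i * u ⟨j, hj⟩ := congrFun hu ⟨j, hj⟩
      rw [Pi.smul_apply, smul_eq_mul, hvj, ← mul_assoc, ← pow_add, Nat.sub_add_cancel hi,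
        hnil, zero_mul]
    have hzero := eq_zero_of_forall_mem_eq_zero_of_sub_minDist_lt (D.smul_mem _ hv) hI hvanish
    choose w hw using fun j =>
      hmax.pow_dvd_of_pow_sub_mul_eq_zero hnil hnil' hi (congrFun hzero j)
    exact ⟨w, funext hw⟩
  · rintro ⟨u, rfl⟩
    exact ⟨I.restrict u, rfl⟩

end Codes

section MatrixType

variable {R : Type*} [CommRing R] {γ : R} {s : ℕ} {m ι ι' : Type*}

theorem matrixType_congr {M : m → ι → R} {M' : m → ι' → R} {t : ℕ → ℕ}
    (hM : ∀ r, ∀ i ≤ s, (∃ u, M r = γ ^ i • u) ↔ ∃ u, M' r = γ ^ i • u) :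
    MatrixType γ s M t ↔ MatrixType γ s M' t := by
  refine forall₂_congr fun i hi => ?_
  rw [Nat.card_congr (Equiv.subtypeEquivRight fun r => by rw [hM r i hi.le, hM r (i + 1) hi])]

theorem MatrixType.iff_forall_lt_eq {M : m → ι → R} {t t' : ℕ → ℕ} (h : MatrixType γ s M t) :
    MatrixType γ s M t' ↔ ∀ i < s, t' i = t i :=
  forall₂_congr fun i hi => by rw [h i hi, eq_comm]

end MatrixType

theorem natCard_finset_card_eq_and {α : Type*} [Fintype α] {ν : ℕ} {P : Finset α → Prop}
    {q : Prop} [Decidable q] (hP : ∀ I : Finset α, I.card = ν → (P I ↔ q)) :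
    Nat.card {I : Finset α // I.card = ν ∧ P I} = if q then (Fintype.card α).choose ν else 0 := by
  split_ifs with hq
  · rw [← Fintype.card_finset_len, ← Nat.card_eq_fintype_card]
    exact Nat.card_congr (Equiv.subtypeEquivRight fun I => and_iff_left_of_imp fun hI =>
      (hP I hI).mpr hq)
  · have : IsEmpty {I : Finset α // I.card = ν ∧ P I} :=
      ⟨fun ⟨I, hI, hPI⟩ => hq ((hP I hI).mp hPI)⟩
    exact Nat.card_of_isEmpty

open Classical in
theorem stmt_8_general {R : Type*} [CommRing R]
    (γ : R) (s : ℕ) (hmax : MaxIdealGen γ) (hnil : γ ^ s = 0) (hnil' : γ ^ (s - 1) ≠ 0)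
    (hs : 0 < s)
    {n : ℕ} (C : Submodule R (Fin n → R)) (k : ℕ → ℕ)
    (K : ℕ)
    (H : Matrix (Fin (n - k 0)) (Fin n) R) (hH : IsParityCheck H C)
    (hHtype : MatrixType γ s H (fun i => if i = 0 then n - K else k (s - i)))
    (ν : ℕ) (hν1 : n - minDist (dualCode C : Set (Fin n → R)) < ν)
    (t : ℕ → ℕ) :
    Nat.card {I : Finset (Fin n) // I.card = ν ∧
        MatrixType γ s (fun (r : Fin (n - k 0)) (j : {x : Fin n // x ∈ I}) => H r j.1) t}
      = if (t 0 = n - K ∧ ∀ i, 1 ≤ i → i < s → t i = k (s - i)) then n.choose ν else 0 := by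
  have htype_iff : (∀ i < s, t i = if i = 0 then n - K else k (s - i)) ↔
      (t 0 = n - K ∧ ∀ i, 1 ≤ i → i < s → t i = k (s - i)) := by
    constructor
    · intro h
      exact ⟨h 0 hs, fun i hi his => by simpa [Nat.one_le_iff_ne_zero.mp hi] using h i his⟩
    · rintro ⟨h0, h⟩ i his
      rcases Nat.eq_zero_or_pos i with rfl | hi
      · simpa using h0
      · simpa [hi.ne'] using h i hi his
  have hsub : ∀ I : Finset (Fin n), I.card = ν →
      (MatrixType γ s (fun (r : Fin (n - k 0)) (j : {x : Fin n // x ∈ I}) => H r j.1) t ↔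
        t 0 = n - K ∧ ∀ i, 1 ≤ i → i < s → t i = k (s - i)) := fun I hI => by
    rw [← htype_iff, ← hHtype.iff_forall_lt_eq]
    exact matrixType_congr fun r i hi =>
      exists_restrict_eq_pow_smul_iff hmax hnil hnil' hi (hH.row_mem_dualCode r) (hI ▸ hν1)
  convert natCard_finset_card_eq_and hsub
  exact (Fintype.card_fin n).symm

open Classical in
theorem stmt_8 {R : Type*} [CommRing R] [Fintype R] (hR : IsChainRing R)
    (γ : R) (s p : ℕ) (hmax : MaxIdealGen γ) (hnil : γ ^ s = 0) (hnil' : γ ^ (s - 1) ≠ 0)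
    (hp : Nat.card (R ⧸ Ideal.span {γ}) = p) (hs : 0 < s)
    {n : ℕ} (C : Submodule R (Fin n → R)) (k : ℕ → ℕ) (htype : CodeHasType γ s C k)
    (K : ℕ) (hK : K = ∑ i ∈ Finset.range s, k i)
    (H : Matrix (Fin (n - k 0)) (Fin n) R) (hH : IsParityCheck H C)
    (hHtype : MatrixType γ s H (fun i => if i = 0 then n - K else k (s - i)))
    (ν : ℕ) (hν1 : n - minDist (dualCode C : Set (Fin n → R)) < ν) (hν2 : ν ≤ n)
    (t : ℕ → ℕ) :
    Nat.card {I : Finset (Fin n) // I.card = ν ∧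
        MatrixType γ s (fun (r : Fin (n - k 0)) (j : {x : Fin n // x ∈ I}) => H r j.1) t}
      = if (t 0 = n - K ∧ ∀ i, 1 ≤ i → i < s → t i = k (s - i)) then n.choose ν else 0 :=
  stmt_8_general γ s hmax hnil hnil' hs C k K H hH hHtype ν hν1 t
end

section
/- Let H be a parity-check matrix in standard form for a linear code C of type (k_0,...,k_{s-1}) over a finite chain ring R, so that H is a generator matrix for C^\perp. A message v \in R^{n-k_0} satisfies v H = 0 if and only if v has the block form v = (0,...,0 | \gamma^{s-1} v_1 | \gamma^{s-2} v_2 | ... | \gamma v_{s-1}), where the zero block has length n - K and the block multiplied by \gamma^{s-j} has length k_{s-j}. -/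
open Matrix Finset

/- Proof idea: testing `v H = 0` against the pivot column of row `i` kills every row `i'` with
`b i' ≥ b i` (the pivot columns of rows of equal or higher order are zero there), so by strong
induction on `b i` each coordinate satisfies `v i * γ ^ b i = 0`. In a chain ring whose maximal ideal
`(γ)` has nilpotency index exactly `s`, the annihilator of `γ ^ t` is `(γ ^ (s - t))`. -/

theorem MaxIdealGen.dvd_of_not_isUnit_s9 {R : Type*} [CommRing R] {γ a : R} (hγ : MaxIdealGen γ)
    (ha : ¬IsUnit a) : γ ∣ a :=
  Ideal.mem_span_singleton.mp <|
    hγ.2 _ (mt Ideal.span_singleton_eq_top.mp ha) (Ideal.mem_span_singleton_self a)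

theorem MaxIdealGen.pow_dvd_of_mul_pow_eq_zero {R : Type*} [CommRing R] {γ : R} {s : ℕ}
    (hγ : MaxIdealGen γ) (hs : γ ^ (s - 1) ≠ 0) {x : R} {t : ℕ} (hx : x * γ ^ t = 0) :
    γ ^ (s - t) ∣ x := by
  induction hd : s - t generalizing x t with
  | zero => rw [pow_zero]; exact one_dvd x
  | succ d ih =>
    by_cases hunit : IsUnit x
    · have hγt : γ ^ t = 0 := hunit.mul_right_eq_zero.mp hx
      exact absurd (pow_eq_zero_of_le (by omega) hγt) hs
    · -- peel one factor `γ` off `x` and move it onto the annihilated power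
      obtain ⟨y, rfl⟩ := hγ.dvd_of_not_isUnit_s9 hunit
      have hy : y * γ ^ (t + 1) = 0 := by rw [← hx]; ring
      rw [pow_succ']
      exact mul_dvd_mul_left γ (ih hy (by omega))

theorem MaxIdealGen.mul_pow_eq_zero_iff {R : Type*} [CommRing R] {γ : R} {s : ℕ}
    (hγ : MaxIdealGen γ) (hnil : γ ^ s = 0) (hs : γ ^ (s - 1) ≠ 0) {x : R} {t : ℕ} (ht : t ≤ s) :
    x * γ ^ t = 0 ↔ γ ^ (s - t) ∣ x := by
  refine ⟨hγ.pow_dvd_of_mul_pow_eq_zero hs, ?_⟩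
  rintro ⟨w, rfl⟩
  rw [mul_right_comm, ← pow_add, Nat.sub_add_cancel ht, hnil, zero_mul]

section Pivots

variable {R m ι : Type*} [Semiring R] {γ : R} {H : Matrix m ι R} {b : m → ℕ}

theorem mul_apply_eq_zero_of_mul_pow_eq_zero {x : R} {i : m}
    (hdiv : ∃ u, H i = γ ^ b i • u) (hx : x * γ ^ b i = 0) (c : ι) : x * H i c = 0 := by
  obtain ⟨u, hu⟩ := hdiv
  rw [hu, Pi.smul_apply, smul_eq_mul, ← mul_assoc, hx, zero_mul]

theorem vecMul_eq_zero_iff_forall_mul_pow_eq_zero [Fintype m] (hdiv : ∀ i, ∃ u, H i = γ ^ b i • u)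
    {colOf : m → ι} (hid : ∀ i, H i (colOf i) = γ ^ b i)
    (hzero : ∀ i i', i ≠ i' → b i ≤ b i' → H i' (colOf i) = 0) (v : m → R) :
    vecMul v H = 0 ↔ ∀ i, v i * γ ^ b i = 0 := by
  constructor
  · intro hv
    suffices ∀ t i, b i = t → v i * γ ^ b i = 0 from fun i => this _ i rfl
    intro t
    induction t using Nat.strong_induction_on with
    | _ t ih =>
      rintro i rfl
      have hcol : ∑ i', v i' * H i' (colOf i) = 0 := congrFun hv (colOf i)
      rwa [Finset.sum_eq_single_of_mem i (Finset.mem_univ i) fun i' _ hne => ?_, hid] at hcol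
      rcases le_or_gt (b i) (b i') with hle | hlt
      · rw [hzero i i' hne.symm hle, mul_zero]
      · exact mul_apply_eq_zero_of_mul_pow_eq_zero (hdiv i') (ih _ hlt i' rfl) _
  · intro hv
    funext c
    exact Finset.sum_eq_zero fun i _ => mul_apply_eq_zero_of_mul_pow_eq_zero (hdiv i) (hv i) c

end Pivots

theorem stmt_9_general {R : Type*} [CommRing R]
    (γ : R) (s : ℕ) (hmax : MaxIdealGen γ) (hnil : γ ^ s = 0) (hnil' : γ ^ (s - 1) ≠ 0)
    {n : ℕ} (k : ℕ → ℕ)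
    (H : Matrix (Fin (n - k 0)) (Fin n) R)
    (b : Fin (n - k 0) → ℕ) (hb : ∀ i, b i < s)
    (hdiv : ∀ i, ∃ u, H i = γ ^ (b i) • u)
    (colOf : Fin (n - k 0) → Fin n)
    (hid : ∀ i, H i (colOf i) = γ ^ (b i))
    (hzero : ∀ i i', i ≠ i' → b i ≤ b i' → H i' (colOf i) = 0) :
    ∀ v : Fin (n - k 0) → R,
      Matrix.vecMul v H = 0 ↔ ∀ i, ∃ w, v i = γ ^ (s - b i) * w := by
  intro v
  rw [vecMul_eq_zero_iff_forall_mul_pow_eq_zero hdiv hid hzero]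
  exact forall_congr' fun i => hmax.mul_pow_eq_zero_iff hnil hnil' (hb i).le

theorem stmt_9 {R : Type*} [CommRing R] [Fintype R] (hR : IsChainRing R)
    (γ : R) (s p : ℕ) (hmax : MaxIdealGen γ) (hnil : γ ^ s = 0) (hnil' : γ ^ (s - 1) ≠ 0)
    (hp : Nat.card (R ⧸ Ideal.span {γ}) = p) (hs : 0 < s)
    {n : ℕ} (C : Submodule R (Fin n → R)) (k : ℕ → ℕ)
    (K : ℕ) (hK : K = ∑ i ∈ Finset.range s, k i)
    (H : Matrix (Fin (n - k 0)) (Fin n) R) (hH : IsParityCheck H C)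
    (b : Fin (n - k 0) → ℕ) (hb : ∀ i, b i < s)
    (hb0 : Nat.card {i : Fin (n - k 0) // b i = 0} = n - K)
    (hbj : ∀ j, 1 ≤ j → j < s → Nat.card {i : Fin (n - k 0) // b i = j} = k (s - j))
    (hdiv : ∀ i, ∃ u, H i = γ ^ (b i) • u)
    (colOf : Fin (n - k 0) → Fin n) (hinj : Function.Injective colOf)
    (hid : ∀ i, H i (colOf i) = γ ^ (b i))
    (hzero : ∀ i i', i ≠ i' → b i ≤ b i' → H i' (colOf i) = 0) :
    ∀ v : Fin (n - k 0) → R,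
      Matrix.vecMul v H = 0 ↔ ∀ i, ∃ w, v i = γ ^ (s - b i) * w :=
  stmt_9_general γ s hmax hnil hnil' k H b hb hdiv colOf hid hzero
end

section
/- Let C be a linear code of length n over a finite chain ring with p^s elements, with weight distributions A_j for C and A_j^\perp for its dual. Then for every 0 \le \nu \le n: \sum_{j=0}^{n} \binom{j}{\nu} A_j = (|C| / p^{s\nu}) \sum_{j=0}^{\nu} (-1)^j \binom{n-j}{n-\nu} (p^s - 1)^{\nu - j} A_j^\perp. -/
open Matrix Finset

/-!
Count the pairs `(c, T)` with `c ∈ C` and `T` a `ν`-subset of the support of `c`; this is the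
left-hand side. Inclusion–exclusion over `U ⊆ T` rewrites it through the numbers of codewords
vanishing on `U`. A primitive additive character `ψ` of `R` exists because a chain ring has a
unique minimal ideal, and evaluating `∑_{c ∈ C} ∑_{d supported in U} ψ (c ⬝ᵥ d)` in two ways gives
`q ^ |U| · #{c ∈ C | c = 0 on U} = |C| · #{d ∈ C^⊥ | supp d ⊆ U}`, where `q = |R|`. Summing back
over `supp d ⊆ U ⊆ T`, the binomial theorem contributes `(-1) ^ wt d · (q - 1) ^ (ν - wt d)` for
each of the `(n - wt d).choose (n - ν)` sets `T ⊇ supp d`.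
-/

theorem exists_isPrimitive_addChar_of_isChainRing {R : Type*} [CommRing R] [Finite R]
    (hR : IsChainRing R) : ∃ ψ : AddChar R ℂ, ψ.IsPrimitive := by
  by_cases hR0 : ∃ a : R, a ≠ 0
  swap
  · exact ⟨1, fun a ha => (not_exists.mp hR0 a ha).elim⟩
  -- a character that is nontrivial on the minimal nonzero ideal is primitive
  obtain ⟨a₀, ha₀⟩ := hR0
  obtain ⟨I₀, hI₀, hmin⟩ := wellFounded_lt.has_min {I : Ideal R | I ≠ ⊥}
    ⟨_, Ideal.span_singleton_eq_bot.not.mpr ha₀⟩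
  obtain ⟨x, hx, hx0⟩ := Submodule.exists_mem_ne_zero_of_ne_bot hI₀
  obtain ⟨ψ, hψ⟩ := AddChar.exists_apply_ne_zero.mpr hx0
  refine ⟨ψ, fun a ha hψa => hψ ?_⟩
  have hle : I₀ ≤ Ideal.span {a} := by
    rcases hR I₀ (Ideal.span {a}) with h | h
    · exact h
    · exact (h.lt_or_eq.resolve_left (hmin _ (Ideal.span_singleton_eq_bot.not.mpr ha))).ge
  obtain ⟨r, rfl⟩ := Ideal.mem_span_singleton'.mp (hle hx)
  simpa [mul_comm] using DFunLike.congr_fun hψa r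

theorem AddChar.IsPrimitive.sum_apply_linearMap {R R' M : Type*} [CommRing R] [CommRing R']
    [IsDomain R'] [AddCommGroup M] [Module R M] [Fintype M] [DecidableEq (M →ₗ[R] R)]
    {ψ : AddChar R R'} (hψ : ψ.IsPrimitive) (f : M →ₗ[R] R) :
    ∑ m, ψ (f m) = if f = 0 then (Fintype.card M : R') else 0 := by
  split_ifs with hf
  · simp [hf]
  obtain ⟨m₀, hm₀⟩ := DFunLike.ne_iff.mp hf
  obtain ⟨r, hr⟩ := AddChar.ne_one_iff.mp (hψ hm₀)
  apply AddChar.sum_eq_zero_of_ne_one (ψ := ψ.compAddMonoidHom f.toAddMonoidHom)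
  exact AddChar.ne_one_iff.mpr ⟨r • m₀, by simpa [mul_comm] using hr⟩

theorem Submodule.card_inf_eq_card_subtype {R M : Type*} [Semiring R] [AddCommMonoid M]
    [Module R M] (C D : Submodule R M) :
    Nat.card ↥(C ⊓ D) = Nat.card {c : C // (c : M) ∈ D} :=
  Nat.card_congr (Equiv.subtypeSubtypeEquivSubtypeInter (· ∈ C) (· ∈ D)).symm

section Duality

variable {R : Type*} [CommRing R] {n : ℕ}

theorem mem_dualCode_iff {C : Submodule R (Fin n → R)} {v : Fin n → R} :
    v ∈ dualCode C ↔ ∀ c ∈ C, v ⬝ᵥ c = 0 := Iff.rfl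

theorem dualCode_pi_compl_bot (U : Set (Fin n)) :
    dualCode (Submodule.pi Uᶜ fun _ => ⊥) = Submodule.pi U fun _ => (⊥ : Submodule R R) := by
  ext c
  simp only [mem_dualCode_iff, Submodule.mem_pi, Submodule.mem_bot]
  constructor
  · intro h i hi
    simpa [dotProduct_single] using h (Pi.single i 1) fun j hj => by
      simp [show j ≠ i from fun hji => hj (hji ▸ hi)]
  · intro h d hd
    refine Finset.sum_eq_zero fun i _ => ?_
    by_cases hi : i ∈ U
    · simp [h i hi]
    · simp [hd i hi]

variable [Fintype R]

theorem card_pi_compl_bot (U : Finset (Fin n)) :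
    Nat.card ↥(Submodule.pi (↑U : Set (Fin n))ᶜ fun _ => (⊥ : Submodule R R))
      = Fintype.card R ^ #U := by
  classical
  have h : ({v | v ∈ Submodule.pi (↑U : Set (Fin n))ᶜ fun _ => (⊥ : Submodule R R)} :
        Finset (Fin n → R))
      = Fintype.piFinset fun i => if i ∈ U then Finset.univ else {0} := by
    ext v
    simp only [Finset.mem_filter, Finset.mem_univ, true_and, Submodule.mem_pi,
      Set.mem_compl_iff, Finset.mem_coe, Submodule.mem_bot, Fintype.mem_piFinset]
    refine forall_congr' fun i => ?_
    split_ifs with hi <;> simp [hi]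
  rw [Nat.card_eq_fintype_card, Fintype.card_subtype, h, Fintype.card_piFinset]
  simp [apply_ite Finset.card]

open scoped Classical in
theorem sum_sum_addChar_dotProduct {ψ : AddChar R ℂ} (hψ : ψ.IsPrimitive)
    (C D : Submodule R (Fin n → R)) :
    ∑ c : C, ∑ d : D, ψ ((c : Fin n → R) ⬝ᵥ d) = Nat.card D * Nat.card ↥(C ⊓ dualCode D) := by
  have hc : ∀ c : C, ∑ d : D, ψ ((c : Fin n → R) ⬝ᵥ d)
      = if (c : Fin n → R) ∈ dualCode D then (Nat.card D : ℂ) else 0 := by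
    intro c
    refine (hψ.sum_apply_linearMap (dotProductBilin R R (c : Fin n → R) ∘ₗ D.subtype)).trans ?_
    rw [Nat.card_eq_fintype_card]
    congr 1
    simp [mem_dualCode_iff, LinearMap.ext_iff]
  simp_rw [hc, Submodule.card_inf_eq_card_subtype, Nat.card_eq_fintype_card, Fintype.card_subtype,
    Finset.sum_ite, Finset.sum_const_zero, Finset.sum_const, add_zero, nsmul_eq_mul, mul_comm]

theorem card_mul_card_inf_dualCode_comm {ψ : AddChar R ℂ} (hψ : ψ.IsPrimitive)
    (C D : Submodule R (Fin n → R)) :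
    Nat.card D * Nat.card ↥(C ⊓ dualCode D) = Nat.card C * Nat.card ↥(D ⊓ dualCode C) := by
  classical
  have h : ∑ c : C, ∑ d : D, ψ ((c : Fin n → R) ⬝ᵥ d)
      = ∑ d : D, ∑ c : C, ψ ((d : Fin n → R) ⬝ᵥ c) :=
    Finset.sum_comm.trans (Finset.sum_congr rfl fun d _ =>
      Finset.sum_congr rfl fun c _ => by rw [dotProduct_comm])
  rw [sum_sum_addChar_dotProduct hψ C D, sum_sum_addChar_dotProduct hψ D C] at h
  exact_mod_cast h

theorem card_pow_mul_card_vanishing_eq {ψ : AddChar R ℂ} (hψ : ψ.IsPrimitive)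
    (C : Submodule R (Fin n → R)) (U : Finset (Fin n)) :
    Fintype.card R ^ #U * Nat.card {c : C // ∀ i ∈ U, (c : Fin n → R) i = 0}
      = Nat.card C * Nat.card {d : dualCode C // ∀ i ∉ U, (d : Fin n → R) i = 0} := by
  have h := card_mul_card_inf_dualCode_comm hψ C (Submodule.pi (↑U : Set (Fin n))ᶜ fun _ => ⊥)
  rw [card_pi_compl_bot, dualCode_pi_compl_bot, inf_comm _ (dualCode C),
    Submodule.card_inf_eq_card_subtype, Submodule.card_inf_eq_card_subtype] at h
  simpa [Submodule.mem_pi] using h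

end Duality

theorem Finset.mem_inf_iff_forall {ι α : Type*} [Fintype α] [DecidableEq α] {s : Finset ι}
    {f : ι → Finset α} {a : α} : a ∈ s.inf f ↔ ∀ i ∈ s, a ∈ f i := by
  classical
  induction s using Finset.induction_on <;> simp [*]

theorem card_forall_ne_zero_eq_sum_powerset {ι α M : Type*} [Finite α] [Zero M]
    (x : α → ι → M) (T : Finset ι) :
    (Nat.card {a // ∀ i ∈ T, x a i ≠ 0} : ℤ)
      = ∑ U ∈ T.powerset, (-1 : ℤ) ^ #U * Nat.card {a // ∀ i ∈ U, x a i = 0} := by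
  classical
  have := Fintype.ofFinite α
  have hT : ({a | ∀ i ∈ T, x a i ≠ 0} : Finset α)
      = T.inf fun i => ({a | x a i = 0} : Finset α)ᶜ := by
    ext; simp [Finset.mem_inf_iff_forall]
  have hU : ∀ U : Finset ι, ({a | ∀ i ∈ U, x a i = 0} : Finset α)
      = U.inf fun i => ({a | x a i = 0} : Finset α) := by
    intro U; ext; simp [Finset.mem_inf_iff_forall]
  simp_rw [Nat.card_eq_fintype_card, Fintype.card_subtype]
  rw [hT, Finset.inclusion_exclusion_card_inf_compl]
  simp_rw [hU]

section Subsets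

variable {ι : Type*} [DecidableEq ι]

theorem sum_Icc_neg_one_pow_mul_pow {A : Type*} [CommRing A] {S T : Finset ι} (h : S ⊆ T)
    (q : A) : ∑ U ∈ Icc S T, (-1) ^ #U * q ^ (#T - #U) = (-1) ^ #S * (q - 1) ^ (#T - #S) := by
  have hdisj : ∀ V ∈ (T \ S).powerset, Disjoint S V := fun V hV =>
    Finset.disjoint_of_subset_right (Finset.mem_powerset.mp hV) Finset.disjoint_sdiff
  have hunion : ∀ V ∈ (T \ S).powerset, (-1) ^ #(S ∪ V) * q ^ (#T - #(S ∪ V))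
      = (-1) ^ #S * ((-1) ^ #V * q ^ (#(T \ S) - #V)) := by
    intro V hV
    rw [Finset.card_union_of_disjoint (hdisj V hV), Finset.card_sdiff_of_subset h, pow_add,
      Nat.sub_add_eq, mul_assoc]
  rw [Finset.Icc_eq_image_powerset h, Finset.sum_image fun V hV W hW hVW => by
      rw [← Finset.union_sdiff_cancel_left (hdisj V hV), hVW,
        Finset.union_sdiff_cancel_left (hdisj W hW)],
    Finset.sum_congr rfl hunion, ← Finset.mul_sum,
    Finset.sum_powerset_apply_card (fun m => (-1) ^ m * q ^ (#(T \ S) - m)),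
    ← Finset.card_sdiff_of_subset h, sub_eq_neg_add, add_pow]
  simp_rw [nsmul_eq_mul]
  exact congrArg _ (Finset.sum_congr rfl fun m _ => by ring)

variable [Fintype ι]

theorem card_powersetCard_filter_subset (S : Finset ι) (ν : ℕ) :
    #{T ∈ powersetCard ν univ | T ⊆ S} = (#S).choose ν := by
  rw [← Finset.card_powersetCard]
  congr 1
  ext T
  simp [Finset.mem_powersetCard, and_comm]

theorem card_powersetCard_filter_superset (S : Finset ι) {ν : ℕ} (hν : ν ≤ Fintype.card ι) :
    #{T ∈ powersetCard ν univ | S ⊆ T} = (Fintype.card ι - #S).choose (Fintype.card ι - ν) := by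
  rw [← Finset.card_compl, ← Finset.card_powersetCard]
  refine Finset.card_nbij' compl compl (fun T hT => ?_) (fun V hV => ?_)
    (fun T _ => compl_compl T) (fun V _ => compl_compl V)
  · simp only [Finset.coe_filter, Finset.mem_powersetCard, Set.mem_ofPred_eq] at hT
    simp [Finset.mem_powersetCard, Finset.card_compl, hT.1.2, hT.2]
  · simp only [Finset.mem_coe, Finset.mem_powersetCard] at hV
    simp only [Finset.coe_filter, Finset.mem_powersetCard, Set.mem_ofPred_eq, Finset.card_compl,
      hV.2, Finset.subset_univ, true_and]
    exact ⟨by omega, Finset.subset_compl_comm.mp hV.1⟩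

theorem sum_powersetCard_sum_powerset_ite_subset {A : Type*} [CommRing A] (S : Finset ι) {ν : ℕ}
    (hν : ν ≤ Fintype.card ι) (q : A) :
    ∑ T ∈ powersetCard ν univ, ∑ U ∈ T.powerset, (if S ⊆ U then (-1) ^ #U * q ^ (ν - #U) else 0)
      = (-1) ^ #S * (Fintype.card ι - #S).choose (Fintype.card ι - ν) * (q - 1) ^ (ν - #S) := by
  have inner : ∀ T ∈ powersetCard ν univ,
      ∑ U ∈ T.powerset, (if S ⊆ U then (-1) ^ #U * q ^ (ν - #U) else 0)
        = if S ⊆ T then (-1) ^ #S * (q - 1) ^ (ν - #S) else 0 := by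
    intro T hT
    rw [← (Finset.mem_powersetCard.mp hT).2, ← Finset.sum_filter, ← Finset.Icc_eq_filter_powerset]
    split_ifs with hST
    · exact sum_Icc_neg_one_pow_mul_pow hST q
    · rw [Finset.Icc_eq_empty hST, Finset.sum_empty]
  rw [Finset.sum_congr rfl inner, ← Finset.sum_filter, Finset.sum_const,
    card_powersetCard_filter_superset S hν, nsmul_eq_mul]
  ring

end Subsets

section Weights

open scoped Classical

variable {R : Type*} [CommRing R] {n : ℕ}

theorem wt_eq_hammingNorm (v : Fin n → R) : wt v = hammingNorm v := by
  rw [wt, hammingNorm, Nat.card_eq_fintype_card, Fintype.card_subtype]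

variable [Fintype R]

theorem sum_range_mul_weightDist {S : Type*} [NonAssocSemiring S] (D : Submodule R (Fin n → R))
    (f : ℕ → S) (m : ℕ) :
    ∑ j ∈ range m, f j * weightDist D j
      = ∑ d : D, if wt (d : Fin n → R) < m then f (wt (d : Fin n → R)) else 0 := by
  have hcard : ∀ j, weightDist D j = #{d : D | wt (d : Fin n → R) = j} := fun j => by
    rw [weightDist, ← Fintype.card_subtype, ← Nat.card_eq_fintype_card]
    exact Nat.card_congr (Equiv.subtypeSubtypeEquivSubtypeInter (· ∈ D) (wt · = j)).symm
  simp_rw [hcard, Finset.card_filter, Nat.cast_sum, Finset.mul_sum]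
  rw [Finset.sum_comm]
  refine Finset.sum_congr rfl fun d _ => ?_
  simp [Finset.sum_ite_eq', eq_comm]

theorem sum_choose_wt_eq_sum_card (C : Submodule R (Fin n → R)) (ν : ℕ) :
    ∑ c : C, (wt (c : Fin n → R)).choose ν
      = ∑ T ∈ powersetCard ν univ, Nat.card {c : C // ∀ i ∈ T, (c : Fin n → R) i ≠ 0} := by
  simp_rw [wt_eq_hammingNorm, hammingNorm, ← card_powersetCard_filter_subset, Finset.card_filter,
    Nat.card_eq_fintype_card, Fintype.card_subtype, Finset.card_filter]
  rw [Finset.sum_comm]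
  simp [Finset.subset_iff]

theorem sum_choose_wt_mul_pow {ψ : AddChar R ℂ} (hψ : ψ.IsPrimitive) (C : Submodule R (Fin n → R))
    {ν : ℕ} (hν : ν ≤ n) :
    (∑ c : C, ((wt (c : Fin n → R)).choose ν : ℤ)) * (Fintype.card R : ℤ) ^ ν
      = Nat.card C * ∑ d : dualCode C, (-1) ^ wt (d : Fin n → R) *
          ((n - wt (d : Fin n → R)).choose (n - ν) : ℤ) *
          ((Fintype.card R : ℤ) - 1) ^ (ν - wt (d : Fin n → R)) := by
  have hcount := congrArg (Nat.cast : ℕ → ℤ) (sum_choose_wt_eq_sum_card C ν)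
  push_cast at hcount
  have hvan : ∀ U : Finset (Fin n),
      (Fintype.card R : ℤ) ^ #U * Nat.card {c : C // ∀ i ∈ U, (c : Fin n → R) i = 0}
        = Nat.card C * Nat.card {d : dualCode C // ∀ i ∉ U, (d : Fin n → R) i = 0} := fun U => by
    exact_mod_cast card_pow_mul_card_vanishing_eq hψ C U
  set q : ℤ := (Fintype.card R : ℤ)
  have hsupp : ∀ (d : Fin n → R) (U : Finset (Fin n)),
      ({i | d i ≠ 0} : Finset (Fin n)) ⊆ U ↔ ∀ i ∉ U, d i = 0 := fun d U => by
    simp only [Finset.subset_iff, Finset.mem_filter, Finset.mem_univ, true_and]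
    exact forall_congr' fun i => not_imp_comm
  have hdual : ∀ U : Finset (Fin n), (-1) ^ #U * q ^ (ν - #U) *
      (Nat.card C * Nat.card {d : dualCode C // ∀ i ∉ U, (d : Fin n → R) i = 0})
        = Nat.card C * ∑ d : dualCode C,
            if ({i | (d : Fin n → R) i ≠ 0} : Finset (Fin n)) ⊆ U
            then (-1) ^ #U * q ^ (ν - #U) else 0 := fun U => by
    rw [Nat.card_eq_fintype_card (α := {d : dualCode C // ∀ i ∉ U, (d : Fin n → R) i = 0}),
      Fintype.card_subtype, Finset.card_filter, Nat.cast_sum,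
      Finset.mul_sum, Finset.mul_sum, Finset.mul_sum]
    refine Finset.sum_congr rfl fun d _ => ?_
    simp_rw [hsupp]
    split_ifs <;> ring
  calc (∑ c : C, ((wt (c : Fin n → R)).choose ν : ℤ)) * q ^ ν
      = ∑ T ∈ powersetCard ν univ, ∑ U ∈ T.powerset, (-1) ^ #U * q ^ (ν - #U) *
          (q ^ #U * Nat.card {c : C // ∀ i ∈ U, (c : Fin n → R) i = 0}) := by
        rw [hcount, Finset.sum_mul]
        refine Finset.sum_congr rfl fun T hT => ?_
        rw [card_forall_ne_zero_eq_sum_powerset (fun (c : C) => (c : Fin n → R)), Finset.sum_mul]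
        refine Finset.sum_congr rfl fun U hU => ?_
        have hU : #U ≤ ν := (Finset.card_le_card (Finset.mem_powerset.mp hU)).trans
          (Finset.mem_powersetCard.mp hT).2.le
        rw [← Nat.sub_add_cancel hU, pow_add, Nat.add_sub_cancel]
        ring
    _ = Nat.card C * ∑ d : dualCode C, ∑ T ∈ powersetCard ν univ, ∑ U ∈ T.powerset,
          if ({i | (d : Fin n → R) i ≠ 0} : Finset (Fin n)) ⊆ U
          then (-1) ^ #U * q ^ (ν - #U) else 0 := by
        simp_rw [hvan, hdual, ← Finset.mul_sum]
        exact congrArg _ ((Finset.sum_congr rfl fun T _ => Finset.sum_comm).trans Finset.sum_comm)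
    _ = _ := by
        refine congrArg _ (Finset.sum_congr rfl fun d _ => ?_)
        have hwt : #({i | (d : Fin n → R) i ≠ 0} : Finset (Fin n)) = wt (d : Fin n → R) := by
          rw [wt_eq_hammingNorm]; rfl
        rw [sum_powersetCard_sum_powerset_ite_subset _ (by simpa using hν), Fintype.card_fin, hwt]

end Weights

theorem stmt_14 {R : Type*} [CommRing R] [Fintype R] (hR : IsChainRing R)
    (p s : ℕ) (hcard : Nat.card R = p ^ s)
    {n : ℕ} (C : Submodule R (Fin n → R)) (ν : ℕ) (hν : ν ≤ n) :
    (∑ j ∈ Finset.range (n + 1), (j.choose ν : ℤ) * weightDist C j) * (p : ℤ) ^ (s * ν)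
      = (Nat.card C : ℤ) *
        ∑ j ∈ Finset.range (ν + 1), (-1) ^ j * ((n - j).choose (n - ν) : ℤ) *
          ((p : ℤ) ^ s - 1) ^ (ν - j) * weightDist (dualCode C) j := by
  classical
  obtain ⟨ψ, hψ⟩ := exists_isPrimitive_addChar_of_isChainRing hR
  have hq : (p : ℤ) ^ s = Fintype.card R := by
    rw [← Nat.card_eq_fintype_card, hcard]; push_cast; rfl
  have hwt : ∀ v : Fin n → R, wt v ≤ n := fun v => by
    simpa [wt_eq_hammingNorm] using hammingNorm_le_card_fintype (x := v)
  rw [sum_range_mul_weightDist, sum_range_mul_weightDist, pow_mul, hq]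
  convert sum_choose_wt_mul_pow hψ C hν using 3 with c _ d _
  · simp [Nat.lt_succ_of_le (hwt c)]
  · split_ifs with h
    · rfl
    · rw [Nat.choose_eq_zero_of_lt (by have := hwt d; omega)]
      simp
end

section
/- Let C be an MDS code of length n, rank k, and minimum distance d = n - k + 1 over a finite chain ring with p^s elements. Then for every weight w with d \le w \le n, the number of codewords of weight w is A_w = \binom{n}{w} \sum_{j=0}^{w-d} (-1)^j \binom{w}{j} (p^{s(w-d+1-j)} - 1). -/
open Matrix Finset

/-!
Write `q = |R| = p ^ s` and `m = n - k`. Any `k` coordinates of an MDS code form an information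
set: a codeword vanishing on them has weight at most `m < d`, so restriction to them is injective,
and it is bijective since `|C| = q ^ k`. Hence the codewords supported in a set `T` of size
`w > m` number `q ^ (w - m)`. Inclusion–exclusion over the subsets of `T` counts the codewords
with support exactly `T`, and summing over the `n.choose w` sets `T` gives `A_w`.
-/

section Support

variable {ι R : Type*} [Fintype ι] [Zero R]

noncomputable def supp (v : ι → R) : Finset ι :=
  open Classical in {i | v i ≠ 0}

@[simp]
lemma mem_supp {v : ι → R} {i : ι} : i ∈ supp v ↔ v i ≠ 0 := by
  simp [supp]

lemma supp_subset_iff {v : ι → R} {T : Finset ι} : supp v ⊆ T ↔ ∀ i ∉ T, v i = 0 := by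
  simp only [subset_iff, mem_supp]
  exact ⟨fun h i hi => by_contra fun h0 => hi (h h0), fun h i hi => by_contra fun hT => hi (h i hT)⟩

lemma wt_eq_card_supp {n : ℕ} (v : Fin n → R) : wt v = #(supp v) := by
  classical
  rw [wt, Nat.card_eq_fintype_card, Fintype.card_subtype]
  rfl

lemma card_supp_subset [DecidableEq ι] [Fintype R] (A : Finset ι) :
    #{v : ι → R | supp v ⊆ A} = Fintype.card R ^ #A := by
  have : ({v : ι → R | supp v ⊆ A} : Finset _) =
      Fintype.piFinset fun i => if i ∈ A then univ else {0} := by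
    ext v
    simp only [mem_filter, mem_univ, true_and, supp_subset_iff, Fintype.mem_piFinset]
    refine forall_congr' fun i => ?_
    split_ifs <;> simp [*]
  rw [this, Fintype.card_piFinset]
  simp [apply_ite]

lemma card_supp_eq_sum_powerset [DecidableEq ι] [Fintype R] (P : (ι → R) → Prop)
    [DecidablePred P] (T : Finset ι) :
    (#{c | P c ∧ supp c = T} : ℤ) = ∑ t ∈ T.powerset, (-1 : ℤ) ^ #t * #{c | P c ∧ supp c ⊆ T \ t} := by
  classical
  let Z : ι → Finset (ι → R) := fun i => {c | c i = 0}
  have hZ : ∀ i c, c ∈ Z i ↔ c i = 0 := fun i c => by simp [Z]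
  have hL : ({c | P c ∧ supp c = T} : Finset (ι → R)) =
      {c ∈ T.inf fun i => (Z i)ᶜ | P c ∧ supp c ⊆ T} := by
    ext c
    simp only [mem_filter, mem_univ, true_and, mem_inf, mem_compl, hZ, Finset.ext_iff, subset_iff,
      mem_supp]
    grind
  have hR : ∀ t ∈ T.powerset, ({c | P c ∧ supp c ⊆ T \ t} : Finset (ι → R)) =
      {c ∈ t.inf Z | P c ∧ supp c ⊆ T} := by
    intro t ht
    ext c
    simp only [mem_filter, mem_univ, true_and, mem_inf, hZ, mem_powerset, subset_iff, mem_supp,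
      mem_sdiff] at ht ⊢
    grind
  have := inclusion_exclusion_sum_inf_compl T Z (fun c => if P c ∧ supp c ⊆ T then (1 : ℤ) else 0)
  simp only [sum_boole, smul_eq_mul] at this
  rw [hL, this]
  exact sum_congr rfl fun t ht => by rw [hR t ht]

end Support

lemma alternating_sum_choose_mul_pow_sub (q : ℤ) {m w : ℕ} (h : m < w) :
    ∑ j ∈ range (w + 1), (-1) ^ j * (w.choose j : ℤ) * q ^ (w - m - j) =
      ∑ j ∈ range (w - m), (-1) ^ j * (w.choose j : ℤ) * (q ^ (w - m - j) - 1) := by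
  have hsplit : ∀ j, (-1) ^ j * (w.choose j : ℤ) * q ^ (w - m - j) =
      (-1) ^ j * (w.choose j : ℤ) * (q ^ (w - m - j) - 1) + (-1) ^ j * w.choose j := fun j => by
    ring
  rw [sum_congr rfl fun j _ => hsplit j, sum_add_distrib,
    Int.alternating_sum_range_choose_of_ne (by omega), add_zero]
  refine (sum_subset (range_subset_range.2 (by omega)) fun j _ hj => ?_).symm
  rw [mem_range, not_lt] at hj
  rw [Nat.sub_eq_zero_of_le hj, pow_zero, sub_self, mul_zero]

section MDS

open scoped Classical

variable {R ι : Type*} [Ring R] [Fintype ι] [DecidableEq ι] {C : Submodule R (ι → R)} {k : ℕ}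

lemma eq_of_forall_mem_eq (hd : ∀ c ∈ C, c ≠ 0 → Fintype.card ι - k < #(supp c))
    {S : Finset ι} (hS : k ≤ #S) {c₁ c₂ : ι → R} (hc₁ : c₁ ∈ C) (hc₂ : c₂ ∈ C)
    (h : ∀ i ∈ S, c₁ i = c₂ i) : c₁ = c₂ := by
  rw [← sub_eq_zero]
  by_contra hne
  have hsupp : supp (c₁ - c₂) ⊆ Sᶜ :=
    supp_subset_iff.2 fun i hi => sub_eq_zero.2 (h i (by simpa using hi))
  have := card_le_card hsupp
  rw [card_compl] at this
  have := hd _ (C.sub_mem hc₁ hc₂) hne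
  omega

lemma exists_mem_forall_mem_eq [Fintype R] (hC : Nat.card C = Fintype.card R ^ k)
    (hd : ∀ c ∈ C, c ≠ 0 → Fintype.card ι - k < #(supp c)) {S : Finset ι} (hS : #S = k)
    (x : ι → R) : ∃ c ∈ C, ∀ i ∈ S, c i = x i := by
  let π : (ι → R) → ι → R := fun c => S.piecewise c 0
  let codewords : Finset (ι → R) := {c | c ∈ C}
  let supportedInS : Finset (ι → R) := {v | supp v ⊆ S}
  have hπ : ∀ c, ∀ i ∈ S, π c i = c i := fun c i hi => S.piecewise_eq_of_mem _ _ hi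
  have hπS : ∀ v, π v ∈ supportedInS := fun v => by
    simpa [supportedInS, supp_subset_iff, π] using fun i hi => S.piecewise_eq_of_notMem v 0 hi
  have hinj : Set.InjOn π codewords := fun c₁ hc₁ c₂ hc₂ h =>
    eq_of_forall_mem_eq hd hS.ge (by simpa [codewords] using hc₁) (by simpa [codewords] using hc₂)
      fun i hi => by rw [← hπ c₁ i hi, h, hπ c₂ i hi]
  have hcard : #supportedInS ≤ #codewords := by
    rw [card_supp_subset, hS, ← hC, Nat.card_eq_fintype_card, Fintype.card_subtype]
  obtain ⟨c, hc, hcx⟩ := surjOn_of_injOn_of_card_le π (fun c _ => hπS c) hinj hcard (hπS x)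
  exact ⟨c, by simpa [codewords] using hc, fun i hi => by rw [← hπ c i hi, hcx, hπ x i hi]⟩

lemma card_supp_subset_of_mds [Fintype R] (hC : Nat.card C = Fintype.card R ^ k)
    (hd : ∀ c ∈ C, c ≠ 0 → Fintype.card ι - k < #(supp c)) (hk : k ≤ Fintype.card ι)
    (T : Finset ι) :
    #{c | c ∈ C ∧ supp c ⊆ T} = Fintype.card R ^ (#T - (Fintype.card ι - k)) := by
  rcases le_or_gt #T (Fintype.card ι - k) with hT | hT
  · rw [Nat.sub_eq_zero_of_le hT, pow_zero, card_eq_one]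
    refine ⟨0, eq_singleton_iff_unique_mem.2 ⟨by simp [C.zero_mem, supp_subset_iff], ?_⟩⟩
    simp only [mem_filter, mem_univ, true_and, and_imp]
    intro c hc hcT
    by_contra h0
    have := card_le_card hcT
    have := hd c hc h0
    omega
  -- Restriction to an information set `S ⊇ Tᶜ` matches these codewords with the vectors
  -- supported in `S ∩ T`.
  obtain ⟨S, hTS, -, hS⟩ :=
    exists_subsuperset_card_eq (n := k) (subset_univ Tᶜ) (by rw [card_compl]; omega) (by simpa)
  have hST : #(S ∩ T) = #T - (Fintype.card ι - k) := by
    have hSdiff : S \ T = Tᶜ := by rw [sdiff_eq_inter_compl, inter_eq_right.2 hTS]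
    have := card_inter_add_card_sdiff S T
    rw [hSdiff, card_compl] at this
    have := card_le_univ T
    omega
  rw [← hST, ← card_supp_subset (R := R) (S ∩ T)]
  refine card_nbij (fun c => S.piecewise c 0) ?_ ?_ ?_
  · intro c hc
    simp only [coe_filter, mem_univ, true_and, Set.mem_ofPred_eq, supp_subset_iff, mem_inter,
      not_and_or] at hc ⊢
    intro i hi
    by_cases hiS : i ∈ S
    · rw [S.piecewise_eq_of_mem _ _ hiS, hc.2 i (hi.resolve_left (not_not.2 hiS))]
    · exact S.piecewise_eq_of_notMem _ _ hiS
  · intro c₁ hc₁ c₂ hc₂ h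
    simp only [coe_filter, mem_univ, true_and, Set.mem_ofPred_eq] at hc₁ hc₂
    exact eq_of_forall_mem_eq hd hS.ge hc₁.1 hc₂.1 fun i hi => by
      simpa [S.piecewise_eq_of_mem _ _ hi] using congrFun h i
  · intro v hv
    simp only [coe_filter, mem_univ, true_and, Set.mem_ofPred_eq, supp_subset_iff, mem_inter,
      not_and_or] at hv
    obtain ⟨c, hc, hcv⟩ := exists_mem_forall_mem_eq hC hd hS v
    refine ⟨c, ?_, funext fun i => ?_⟩
    · simp only [coe_filter, mem_univ, true_and, Set.mem_ofPred_eq, supp_subset_iff]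
      exact ⟨hc, fun i hi => by rw [hcv i (hTS (mem_compl.2 hi)), hv i (Or.inr hi)]⟩
    · show S.piecewise c 0 i = v i
      by_cases hiS : i ∈ S
      · rw [S.piecewise_eq_of_mem _ _ hiS, hcv i hiS]
      · rw [S.piecewise_eq_of_notMem _ _ hiS, hv i (Or.inl hiS), Pi.zero_apply]

lemma card_supp_eq_of_mds [Fintype R] (hC : Nat.card C = Fintype.card R ^ k)
    (hd : ∀ c ∈ C, c ≠ 0 → Fintype.card ι - k < #(supp c)) (hk : k ≤ Fintype.card ι)
    {T : Finset ι} (hT : Fintype.card ι - k < #T) :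
    (#{c | c ∈ C ∧ supp c = T} : ℤ) = ∑ j ∈ range (#T - (Fintype.card ι - k)),
      (-1) ^ j * ((#T).choose j : ℤ) *
        ((Fintype.card R : ℤ) ^ (#T - (Fintype.card ι - k) - j) - 1) := by
  rw [← alternating_sum_choose_mul_pow_sub _ hT, card_supp_eq_sum_powerset]
  calc ∑ t ∈ T.powerset, (-1 : ℤ) ^ #t * (#{c | c ∈ C ∧ supp c ⊆ T \ t} : ℤ)
      = ∑ t ∈ T.powerset, (-1 : ℤ) ^ #t *
          (Fintype.card R : ℤ) ^ (#T - (Fintype.card ι - k) - #t) := by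
        refine sum_congr rfl fun t ht => ?_
        rw [card_supp_subset_of_mds hC hd hk, card_sdiff_of_subset (mem_powerset.1 ht),
          Nat.sub_right_comm]
        push_cast
        rfl
    _ = _ := by
        rw [sum_powerset_apply_card
          (fun j => (-1 : ℤ) ^ j * (Fintype.card R : ℤ) ^ (#T - (Fintype.card ι - k) - j))]
        exact sum_congr rfl fun j _ => by rw [nsmul_eq_mul]; ring

end MDS

open Classical in
lemma weightDist_eq_sum_card_supp_eq {R : Type*} [CommRing R] [Fintype R] {n : ℕ}
    (C : Submodule R (Fin n → R)) (w : ℕ) :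
    weightDist C w = ∑ T ∈ powersetCard w univ, #{c | c ∈ C ∧ supp c = T} := by
  rw [weightDist, Nat.card_eq_fintype_card, Fintype.card_subtype,
    card_eq_sum_card_fiberwise (f := supp) fun c hc => ?_]
  · refine sum_congr rfl fun T hT => ?_
    rw [filter_filter]
    refine congrArg card (filter_congr fun c _ => ?_)
    rw [wt_eq_card_supp, and_assoc]
    exact and_congr_right fun _ => ⟨And.right, fun h => ⟨h ▸ (mem_powersetCard.1 hT).2, h⟩⟩
  · rw [mem_coe, mem_filter, wt_eq_card_supp] at hc
    exact mem_powersetCard.2 ⟨subset_univ _, hc.2.2⟩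

theorem stmt_16_general {R : Type*} [CommRing R] [Fintype R]
    (p s : ℕ) (hcard : Nat.card R = p ^ s)
    {n k : ℕ} (C : Submodule R (Fin n → R)) (hfree : Nonempty (C ≃ₗ[R] (Fin k → R)))
    (hkn : k ≤ n) (hMDS : minDist (C : Set (Fin n → R)) = n - k + 1)
    (w : ℕ) (hw1 : n - k + 1 ≤ w) :
    (weightDist C w : ℤ) = (n.choose w : ℤ) *
      ∑ j ∈ Finset.range (w - (n - k + 1) + 1),
        (-1) ^ j * (w.choose j : ℤ) *
          ((p : ℤ) ^ (s * (w - (n - k + 1) + 1 - j)) - 1) := by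
  classical
  have hC : Nat.card C = Fintype.card R ^ k := by
    rw [Nat.card_congr hfree.some.toEquiv, Nat.card_fun, Nat.card_fin, Nat.card_eq_fintype_card]
  have hd : ∀ c ∈ C, c ≠ 0 → Fintype.card (Fin n) - k < #(supp c) := fun c hc h0 => by
    rw [Fintype.card_fin, ← wt_eq_card_supp, Nat.lt_iff_add_one_le, ← hMDS]
    exact Nat.sInf_le ⟨c, hc, h0, rfl⟩
  have hq : (Fintype.card R : ℤ) = (p : ℤ) ^ s := by
    exact_mod_cast Nat.card_eq_fintype_card.symm.trans hcard
  have hw : w - (n - k + 1) + 1 = w - (n - k) := by omega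
  rw [weightDist_eq_sum_card_supp_eq, Nat.cast_sum, sum_congr rfl fun T hT => by
    rw [card_supp_eq_of_mds hC hd (by simpa using hkn) (by simp [(mem_powersetCard.1 hT).2]; omega),
      (mem_powersetCard.1 hT).2]]
  simp only [sum_const, card_powersetCard, card_univ, Fintype.card_fin, nsmul_eq_mul, hw, hq, pow_mul]

theorem stmt_16 {R : Type*} [CommRing R] [Fintype R] (hR : IsChainRing R)
    (p s : ℕ) (hcard : Nat.card R = p ^ s)
    {n k : ℕ} (C : Submodule R (Fin n → R)) (hfree : Nonempty (C ≃ₗ[R] (Fin k → R)))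
    (hkn : k ≤ n) (hMDS : minDist (C : Set (Fin n → R)) = n - k + 1)
    (w : ℕ) (hw1 : n - k + 1 ≤ w) (hw2 : w ≤ n) :
    (weightDist C w : ℤ) = (n.choose w : ℤ) *
      ∑ j ∈ Finset.range (w - (n - k + 1) + 1),
        (-1) ^ j * (w.choose j : ℤ) *
          ((p : ℤ) ^ (s * (w - (n - k + 1) + 1 - j)) - 1) :=
  stmt_16_general p s hcard C hfree hkn hMDS w hw1
end
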